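/- Let $V \in L^\infty(\mathbb{R}^n)$ be real-valued, $R > 0$, and let $\gamma : [0,\infty) \to \mathbb{R}$ be continuous with $\lim_{t\to\infty}\gamma(t) = \infty$. Then there exists $g \in L^2(\mathbb{R}^n)$ and a sequence $t_n \to \infty$ such that $\int_{|x|<R} |u(t_n,x)|^2\,dx > \frac{n}{\gamma(t_n)}$, where $u(t) = e^{it\Delta_V} g$ is the solution of the Schrödinger equation $i\partial_t u - \Delta u + Vu = 0$, $u(0) = g$. In particular, no uniform rate of decay for localized $L^2$ norms of all solutions can hold. -/

import Mathlib

/-! Baire category, in the form of a Banach–Steinhaus argument. For each `m` the set of `g`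
with `m < γ(t) ‖M U(t) g‖²` for some `t ≥ m` is open. It is also dense: if `w ≠ 0` is supported
in the ball, then `M U(t) (x + U(-t) w) = M U(t) x + w`, so either `x` or `x + U(-t) w` has
`‖M U(t) ·‖ ≥ ‖w‖ / 2`, and `w` may be taken arbitrarily small while `γ(t) → ∞`.
Any `g` in the intersection of these sets works. -/

open MeasureTheory

/-- The Hilbert space `L²(ℝⁿ; ℂ)`. -/
abbrev Hsp (n : ℕ) : Type :=
  Lp ℂ 2 (volume : Measure (EuclideanSpace ℝ (Fin n)))

open Filter Metric

theorem exists_tendsto_atTop_forall_lt_of_dense {X : Type*} [TopologicalSpace X] [BaireSpace X]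
    [Nonempty X] {F : ℝ → X → ℝ} (hF : ∀ t, Continuous (F t))
    (hdense : ∀ m : ℕ, Dense {x | ∃ t ≥ (m : ℝ), (m : ℝ) < F t x}) :
    ∃ x, ∃ τ : ℕ → ℝ, Tendsto τ atTop atTop ∧ ∀ m : ℕ, (m : ℝ) < F (τ m) x := by
  have hopen (m : ℕ) : IsOpen {x | ∃ t ≥ (m : ℝ), (m : ℝ) < F t x} := by
    refine isOpen_iff_mem_nhds.2 fun x ⟨t, ht, hx⟩ => ?_
    exact mem_of_superset ((isOpen_lt continuous_const (hF t)).mem_nhds hx) fun y hy => ⟨t, ht, hy⟩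
  obtain ⟨x, hx⟩ := (dense_iInter_of_isOpen_nat hopen hdense).nonempty
  choose τ hτ hlt using Set.mem_iInter.1 hx
  exact ⟨x, τ, tendsto_atTop_mono hτ tendsto_natCast_atTop_atTop, hlt⟩

theorem exists_dist_le_norm_half_norm_map_le {E F 𝓕 : Type*} [SeminormedAddCommGroup E]
    [SeminormedAddCommGroup F] [FunLike 𝓕 E F] [AddMonoidHomClass 𝓕 E F] (A : 𝓕) (x z : E) :
    ∃ y, dist y x ≤ ‖z‖ ∧ ‖A z‖ / 2 ≤ ‖A y‖ := by
  have htriangle : ‖A z‖ ≤ ‖A (x + z)‖ + ‖A x‖ := by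
    simpa [map_add] using norm_sub_le (A (x + z)) (A x)
  rcases le_total ‖A x‖ ‖A (x + z)‖ with h | h
  · exact ⟨x + z, by simp [dist_eq_norm], by linarith⟩
  · exact ⟨x, by simp, by linarith⟩

section NormedSpace

variable {𝕜 E F : Type*} [RCLike 𝕜] [NormedAddCommGroup E] [NormedSpace 𝕜 E]
  [SeminormedAddCommGroup F] [NormedSpace 𝕜 F]

theorem ContinuousLinearMap.exists_norm_eq_le_norm_apply (A : E →L[𝕜] F) {z : E} (hz : z ≠ 0)
    (hAz : ‖z‖ ≤ ‖A z‖) {δ : ℝ} (hδ : 0 ≤ δ) : ∃ w, ‖w‖ = δ ∧ δ ≤ ‖A w‖ := by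
  have hz' : 0 < ‖z‖ := norm_pos_iff.2 hz
  refine ⟨((δ / ‖z‖ : ℝ) : 𝕜) • z, ?_, ?_⟩
  · rw [norm_smul, RCLike.norm_ofReal, abs_of_nonneg (by positivity), div_mul_cancel₀ _ hz'.ne']
  · rw [map_smul, norm_smul, RCLike.norm_ofReal, abs_of_nonneg (by positivity)]
    calc δ = δ / ‖z‖ * ‖z‖ := (div_mul_cancel₀ _ hz'.ne').symm
      _ ≤ δ / ‖z‖ * ‖A z‖ := by gcongr

theorem dense_setOf_exists_ge_lt_mul_norm_sq (A : ℝ → E →L[𝕜] F)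
    (hA : ∀ t, ∃ z ≠ 0, ‖z‖ ≤ ‖A t z‖) {γ : ℝ → ℝ} (hγ : Tendsto γ atTop atTop) (C T : ℝ) :
    Dense {g | ∃ t ≥ T, C < γ t * ‖A t g‖ ^ 2} := by
  refine Metric.dense_iff.2 fun x r hr => ?_
  have hlarge : ∀ᶠ t in atTop, C < γ t * (r / 4) ^ 2 ∧ 0 ≤ γ t ∧ T ≤ t :=
    ((hγ.atTop_mul_const (by positivity)).eventually_gt_atTop C).and
      ((hγ.eventually_ge_atTop 0).and (eventually_ge_atTop T))
  obtain ⟨t, hCt, hγt, hTt⟩ := hlarge.exists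
  obtain ⟨z, hz0, hAz⟩ := hA t
  obtain ⟨w, hw, hAw⟩ := (A t).exists_norm_eq_le_norm_apply hz0 hAz (δ := r / 2) (by positivity)
  obtain ⟨y, hyx, hAy⟩ := exists_dist_le_norm_half_norm_map_le (A t) x w
  refine ⟨y, mem_ball.2 (by linarith), t, hTt, hCt.trans_le ?_⟩
  gcongr
  linarith

theorem exists_tendsto_atTop_div_lt_norm_sq [CompleteSpace E] (A : ℝ → E →L[𝕜] F)
    (hA : ∀ t, ∃ z ≠ 0, ‖z‖ ≤ ‖A t z‖) {γ : ℝ → ℝ} (hγ : Tendsto γ atTop atTop) :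
    ∃ g, ∃ τ : ℕ → ℝ, Tendsto τ atTop atTop ∧ ∀ m : ℕ, (m : ℝ) / γ (τ m) < ‖A (τ m) g‖ ^ 2 := by
  obtain ⟨g, τ, hτ, hlt⟩ := exists_tendsto_atTop_forall_lt_of_dense
    (F := fun t g => γ t * ‖A t g‖ ^ 2)
    (fun t => continuous_const.mul ((A t).continuous.norm.pow 2))
    fun m => dense_setOf_exists_ge_lt_mul_norm_sq A hA hγ m m
  refine ⟨g, τ, hτ, fun m => ?_⟩
  have hγpos : 0 < γ (τ m) :=
    pos_of_mul_pos_left ((Nat.cast_nonneg m).trans_lt (hlt m)) (by positivity)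
  rw [div_lt_iff₀' hγpos]
  exact hlt m

end NormedSpace

section Indicator

variable {α E : Type*} [MeasurableSpace α] {μ : Measure α} [NormedAddCommGroup E]
  {p : ENNReal} {s : Set α} (hs : MeasurableSet s) (hμs : μ s ≠ ⊤) (c : E)

theorem indicator_indicatorConstLp_ae_eq :
    s.indicator (indicatorConstLp p hs hμs c) =ᵐ[μ] indicatorConstLp p hs hμs c :=
  indicatorConstLp_coeFn_notMem.mono fun _ hx => Set.indicator_apply_eq_self.2 hx

theorem indicatorConstLp_ne_zero [Fact (1 ≤ p)] (hμs₀ : μ s ≠ 0) (hc : c ≠ 0) :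
    indicatorConstLp p hs hμs c ≠ 0 := by
  refine norm_ne_zero_iff.1 ?_
  rw [norm_indicatorConstLp' (zero_lt_one.trans_le Fact.out).ne' hμs₀]
  exact mul_ne_zero (norm_ne_zero_iff.2 hc)
    (Real.rpow_pos_of_pos (ENNReal.toReal_pos hμs₀ hμs) _).ne'

end Indicator

theorem stmt11_general (n : ℕ) (R : ℝ) (hR : 0 < R)
    (U : ℝ → Hsp n →L[ℂ] Hsp n)
    (hUiso : ∀ (t : ℝ) (f : Hsp n), ‖U t f‖ = ‖f‖)
    (hUgrp : ∀ s t : ℝ, (U s).comp (U t) = U (s + t))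
    (hU0 : U 0 = ContinuousLinearMap.id ℂ (Hsp n))
    (M : Hsp n →L[ℂ] Hsp n)
    (hM : ∀ f : Hsp n,
      (M f : EuclideanSpace ℝ (Fin n) → ℂ)
        =ᵐ[volume] (Metric.ball (0 : EuclideanSpace ℝ (Fin n)) R).indicator f)
    (γ : ℝ → ℝ)
    (hγ : Filter.Tendsto γ Filter.atTop Filter.atTop) :
    ∃ g : Hsp n, ∃ t : ℕ → ℝ, Filter.Tendsto t Filter.atTop Filter.atTop ∧
      ∀ m : ℕ, (m : ℝ) / γ (t m) < ‖M (U (t m) g)‖ ^ 2 := by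
  set h : Hsp n :=
    indicatorConstLp 2 (s := ball 0 R) measurableSet_ball measure_ball_lt_top.ne (1 : ℂ)
  have hh : h ≠ 0 :=
    indicatorConstLp_ne_zero _ _ _ (measure_ball_pos _ _ hR).ne' one_ne_zero
  have hMh : M h = h := Lp.ext ((hM h).trans (indicator_indicatorConstLp_ae_eq _ _ _))
  have hUinv (t : ℝ) : U t (U (-t) h) = h := by
    simpa [hU0] using congr($(hUgrp t (-t)) h)
  refine exists_tendsto_atTop_div_lt_norm_sq (fun t => M.comp (U t)) (fun t => ?_) hγ
  refine ⟨U (-t) h, norm_ne_zero_iff.1 (by rw [hUiso]; exact norm_ne_zero_iff.2 hh), ?_⟩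
  simp [hUinv, hMh, hUiso]

/-- For any bounded potential (modelled by a strongly continuous
unitary group `U` on `L²`), any `R > 0` and any continuous `γ` with `γ(t) → ∞`,
there exist `g ∈ L²` and times `t_m → ∞` with
`∫_{|x|<R} |u(t_m)|² dx > m / γ(t_m)`, where `u(t) = e^{itΔ_V}g`; here
`∫_{|x|<R}|u(t)|² = ‖χ_{|x|<R} U(t) g‖²`. -/
theorem stmt11 (n : ℕ) (hn : 0 < n) (R : ℝ) (hR : 0 < R)
    (U : ℝ → Hsp n →L[ℂ] Hsp n)
    (hUiso : ∀ (t : ℝ) (f : Hsp n), ‖U t f‖ = ‖f‖)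
    (hUgrp : ∀ s t : ℝ, (U s).comp (U t) = U (s + t))
    (hU0 : U 0 = ContinuousLinearMap.id ℂ (Hsp n))
    (hUcont : ∀ g : Hsp n, Continuous fun t : ℝ => U t g)
    (M : Hsp n →L[ℂ] Hsp n)
    (hM : ∀ f : Hsp n,
      (M f : EuclideanSpace ℝ (Fin n) → ℂ)
        =ᵐ[volume] (Metric.ball (0 : EuclideanSpace ℝ (Fin n)) R).indicator f)
    (γ : ℝ → ℝ) (hγc : Continuous γ)
    (hγ : Filter.Tendsto γ Filter.atTop Filter.atTop) :
    ∃ g : Hsp n, ∃ t : ℕ → ℝ, Filter.Tendsto t Filter.atTop Filter.atTop ∧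
      ∀ m : ℕ, (m : ℝ) / γ (t m) < ‖M (U (t m) g)‖ ^ 2 :=
  stmt11_general n R hR U hUiso hUgrp hU0 M hM γ hγ
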